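/- Let K be a convex body in S^d ⊆ ℝ^{d+1} and let F be a proper exposed face of K. Then the conjugate face F̂ = {x ∈ K* : ⟨x,y⟩ = 0 for all y ∈ F} is a proper exposed face of K*; moreover F̂ = ⋂_{y ∈ F} ({x ∈ S^d : ⟨x,y⟩ = 0} ∩ K*), where for every y ∈ F the closed hemisphere {x ∈ S^d : ⟨x,y⟩ ≤ 0} contains K* (so its boundary great sphere supports K*); and the conjugate of F̂ (taken with respect to K*) equals F, so that F ↦ F̂ is a bijection between the exposed faces of K and those of K*. -/

import Mathlib

open RealInnerProductSpace Metric Set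

noncomputable section

/-- Euclidean `n`-space. -/
abbrev Euc (n : ℕ) := EuclideanSpace ℝ (Fin n)

/-- The unit sphere `S^d` in `ℝ^{d+1}`. -/
def uSphere (d : ℕ) : Set (Euc (d + 1)) := Metric.sphere 0 1

/-- Radial (normalizing) projection onto the unit sphere. -/
def nproj {n : ℕ} (x : Euc n) : Euc n := ‖x‖⁻¹ • x

/-- The spherical segment (shorter great-circle arc) with endpoints `p` and `q`
(meaningful when `p ≠ -q`). -/
def sphSeg {n : ℕ} (p q : Euc n) : Set (Euc n) :=
  (fun t : ℝ => nproj ((1 - t) • p + t • q)) '' Set.Icc 0 1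

/-- The relative interior of the spherical segment with endpoints `p` and `q`. -/
def sphOpenSeg {n : ℕ} (p q : Euc n) : Set (Euc n) :=
  (fun t : ℝ => nproj ((1 - t) • p + t • q)) '' Set.Ioo 0 1

/-- The great circle through `p` and `q`. -/
def greatCircle (d : ℕ) (p q : Euc (d + 1)) : Set (Euc (d + 1)) :=
  {z ∈ uSphere d | z ∈ Submodule.span ℝ {p, q}}

/-- The open hemisphere with center `x`. -/
def openHemi (d : ℕ) (x : Euc (d + 1)) : Set (Euc (d + 1)) :=
  {y ∈ uSphere d | 0 < ⟪x, y⟫}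

/-- The `(d-1)`-dimensional great sphere of `S^d` with pole `u`. -/
def greatSphere (d : ℕ) (u : Euc (d + 1)) : Set (Euc (d + 1)) :=
  {y ∈ uSphere d | ⟪u, y⟫ = 0}

/-- A set `C ⊆ S^d` is spherically convex if it is contained in an open hemisphere
and contains the shorter arc connecting any two of its points. -/
def SphConvex (d : ℕ) (C : Set (Euc (d + 1))) : Prop :=
  C ⊆ uSphere d ∧ (∃ x ∈ uSphere d, C ⊆ openHemi d x) ∧
    ∀ p ∈ C, ∀ q ∈ C, sphSeg p q ⊆ C

/-- The interior of `K` relative to the sphere `S^d`. -/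
def sphInt (d : ℕ) (K : Set (Euc (d + 1))) : Set (Euc (d + 1)) :=
  {x ∈ uSphere d | ∃ U : Set (Euc (d + 1)), IsOpen U ∧ x ∈ U ∧ U ∩ uSphere d ⊆ K}

/-- The boundary of a closed set `K ⊆ S^d` relative to the sphere `S^d`. -/
def sphBd (d : ℕ) (K : Set (Euc (d + 1))) : Set (Euc (d + 1)) := K \ sphInt d K

/-- A convex body in `S^d`: a compact spherically convex set with nonempty interior
relative to `S^d`. -/
def IsSphBody (d : ℕ) (K : Set (Euc (d + 1))) : Prop :=
  IsCompact K ∧ SphConvex d K ∧ (sphInt d K).Nonempty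

/-- The boundary point `q` of `K` is illuminated from the point `p`. -/
def SphIlluminated (d : ℕ) (K : Set (Euc (d + 1))) (p q : Euc (d + 1)) : Prop :=
  q ≠ -p ∧ sphSeg p q ∩ sphInt d K = ∅ ∧ (greatCircle d p q ∩ sphInt d K).Nonempty

/-- The set `S` illuminates the convex body `K ⊆ S^d`. -/
def SphIlluminates (d : ℕ) (K S : Set (Euc (d + 1))) : Prop :=
  ∀ q ∈ sphBd d K, ∃ p ∈ S, SphIlluminated d K p q

/-- The illumination number of a convex body `K` in `S^d`: the smallest cardinality of
a set illuminating `K` and lying on a `(d-1)`-dimensional great sphere disjoint from `K`. -/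
def sphIllumNumber (d : ℕ) (K : Set (Euc (d + 1))) : ℕ∞ :=
  sInf {n : ℕ∞ | ∃ u ∈ uSphere d, greatSphere d u ∩ K = ∅ ∧
    ∃ S : Finset (Euc (d + 1)), ↑S ⊆ greatSphere d u ∧ SphIlluminates d K ↑S ∧
      (S.card : ℕ∞) = n}

/-- A convex body in a Euclidean space: compact, convex, with nonempty interior. -/
def IsConvexBody {n : ℕ} (K : Set (Euc n)) : Prop :=
  IsCompact K ∧ Convex ℝ K ∧ (interior K).Nonempty

/-- The boundary point `p` of `K` is illuminated from the direction `v`. -/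
def IlluminatedDir {n : ℕ} (K : Set (Euc n)) (v p : Euc n) : Prop :=
  ∃ t : ℝ, 0 < t ∧ p + t • v ∈ interior K

/-- The finite set of unit vectors `D` illuminates the convex body `K`. -/
def IlluminatesDirs {n : ℕ} (D : Finset (Euc n)) (K : Set (Euc n)) : Prop :=
  (∀ v ∈ D, ‖v‖ = 1) ∧ ∀ p ∈ frontier K, ∃ v ∈ D, IlluminatedDir K v p

/-- The illumination number of a convex body in Euclidean space. -/
def illumNumber {n : ℕ} (K : Set (Euc n)) : ℕ∞ :=
  sInf {m : ℕ∞ | ∃ D : Finset (Euc n), IlluminatesDirs D K ∧ (D.card : ℕ∞) = m}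

/-- The illumination number of a convex body `K` of an affine subspace of a Euclidean
space, computed within the affine span of `K` (directions are parallel to the affine
span; interior and boundary are relative to the affine span). -/
def intIllumNumber {n : ℕ} (K : Set (Euc n)) : ℕ∞ :=
  sInf {m : ℕ∞ | ∃ D : Finset (Euc n),
    (∀ v ∈ D, ‖v‖ = 1 ∧ v ∈ (affineSpan ℝ K).direction) ∧
    (∀ p ∈ intrinsicFrontier ℝ K, ∃ v ∈ D, ∃ t : ℝ, 0 < t ∧
      p + t • v ∈ intrinsicInterior ℝ K) ∧
    (D.card : ℕ∞) = m}

/-- A face of a convex body `K` in Euclidean space: a convex subset `F ⊆ K` such that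
any segment of `K` whose relative interior meets `F` is contained in `F`. -/
def IsFace {n : ℕ} (K F : Set (Euc n)) : Prop :=
  F ⊆ K ∧ Convex ℝ F ∧
    ∀ x ∈ K, ∀ y ∈ K, (openSegment ℝ x y ∩ F).Nonempty → segment ℝ x y ⊆ F

/-- The dimension of a subset of a Euclidean space (dimension of its affine hull). -/
def faceDim {n : ℕ} (F : Set (Euc n)) : ℕ := Module.finrank ℝ (vectorSpan ℝ F)

/-- A face of a convex body `K` in `S^d`: a spherically convex subset `F ⊆ K` such that
any spherical segment of `K` whose relative interior meets `F` is contained in `F`. -/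
def IsSphFace (d : ℕ) (K F : Set (Euc (d + 1))) : Prop :=
  F ⊆ K ∧ SphConvex d F ∧
    ∀ p ∈ K, ∀ q ∈ K, (sphOpenSeg p q ∩ F).Nonempty → sphSeg p q ⊆ F

/-- The (spherical) dimension of a subset `F` of `S^d`: one less than the dimension of
its linear hull. -/
def sphFaceDim (d : ℕ) (F : Set (Euc (d + 1))) : ℕ :=
  Module.finrank ℝ (Submodule.span ℝ F) - 1

/-- The polar body of a convex body `K ⊆ S^d`. -/
def sphPolar (d : ℕ) (K : Set (Euc (d + 1))) : Set (Euc (d + 1)) :=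
  {x ∈ uSphere d | ∀ y ∈ K, ⟪x, y⟫ ≤ 0}

/-- An exposed face of a convex body `L` in `S^d`: a nonempty intersection of `L`
with a supporting great sphere. -/
def IsSphExposedFace (d : ℕ) (L F : Set (Euc (d + 1))) : Prop :=
  F.Nonempty ∧ ∃ u ∈ uSphere d, (∀ y ∈ L, ⟪u, y⟫ ≤ 0) ∧ F = {y ∈ L | ⟪u, y⟫ = 0}

/-- The conjugate face of an exposed face `F` of a convex body `K ⊆ S^d`. -/
def conjFace (d : ℕ) (K F : Set (Euc (d + 1))) : Set (Euc (d + 1)) :=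
  {x ∈ sphPolar d K | ∀ y ∈ F, ⟪x, y⟫ = 0}

/-- Two Euclidean convex bodies are combinatorially equivalent if there is a
homeomorphism between their boundaries mapping faces to faces. -/
def CombEquiv {n : ℕ} (K K' : Set (Euc n)) : Prop :=
  ∃ h : (frontier K) ≃ₜ (frontier K'),
    ∀ X : Set (frontier K),
      IsFace K (Subtype.val '' X) ↔ IsFace K' (Subtype.val '' (h '' X))

/-- The combinatorial illumination number of a Euclidean convex body `K`: the smallest
number of directions that illuminate some convex body combinatorially equivalent to `K`. -/
def combIllumNumber {n : ℕ} (K : Set (Euc n)) : ℕ∞ :=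
  sInf {m : ℕ∞ | ∃ K' : Set (Euc n), IsConvexBody K' ∧ CombEquiv K K' ∧
    ∃ D : Finset (Euc n), IlluminatesDirs D K' ∧ (D.card : ℕ∞) = m}

/-- A convex polytope in `S^d`: a convex body that is the intersection of finitely many
closed hemispheres. -/
def IsSphPolytope (d : ℕ) (P : Set (Euc (d + 1))) : Prop :=
  IsSphBody d P ∧ ∃ s : Finset (Euc (d + 1)), (∀ u ∈ s, u ∈ uSphere d) ∧
    P = uSphere d ∩ {y | ∀ u ∈ s, ⟪u, y⟫ ≤ 0}

end

open Filter Topology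

/-!
`K` is compact and spherically convex, so `{t • y | t ≥ 0, y ∈ K}` is a closed convex cone and
Farkas' lemma gives bipolarity `K** = K`. Finitely many points of an exposed face `F` span its
linear hull; their sum `v` pairs nonpositively with every point of `K*` and vanishes exactly on
those orthogonal to all of `F`, so (normalized) it exposes `F̂` in `K*`. The normal `u` exposing
`F` lies in `F̂`, so by bipolarity the conjugate of `F̂` is `F`. An interior point of `K` puts
`K*` into an open hemisphere as well, so the same applies to `K*`, and conjugation is an
involution between the exposed faces of `K` and `K*`.
-/

section Normalization

variable {n : ℕ}

lemma norm_smul_nproj {x : Euc n} (hx : x ≠ 0) : ‖x‖ • nproj x = x := by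
  rw [nproj, smul_smul, mul_inv_cancel₀ (norm_ne_zero_iff.mpr hx), one_smul]

lemma nproj_eq_self {x : Euc n} (hx : ‖x‖ = 1) : nproj x = x := by
  rw [nproj, hx, inv_one, one_smul]

lemma inner_nproj_right (x y : Euc n) : ⟪y, nproj x⟫ = ‖x‖⁻¹ * ⟪y, x⟫ :=
  real_inner_smul_right _ _ _

lemma continuousAt_nproj {x : Euc n} (hx : x ≠ 0) : ContinuousAt nproj x :=
  (continuous_norm.continuousAt.inv₀ (norm_ne_zero_iff.mpr hx)).smul continuousAt_id

end Normalization

section Cone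

variable {E : Type*} [NormedAddCommGroup E] [NormedSpace ℝ E]

def coneOver (K : Set E) : Set E :=
  {x | ∃ t : ℝ, 0 ≤ t ∧ ∃ y ∈ K, x = t • y}

lemma subset_coneOver (K : Set E) : K ⊆ coneOver K :=
  fun y hy => ⟨1, zero_le_one, y, hy, (one_smul ℝ y).symm⟩

lemma smul_mem_coneOver {K : Set E} {c : ℝ} (hc : 0 ≤ c) {x : E} (hx : x ∈ coneOver K) :
    c • x ∈ coneOver K := by
  obtain ⟨t, ht, y, hy, rfl⟩ := hx
  exact ⟨c * t, mul_nonneg hc ht, y, hy, smul_smul c t y⟩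

lemma mem_of_mem_coneOver {K : Set E} (hK : K ⊆ sphere 0 1) {x : E} (hx : x ∈ coneOver K)
    (hx1 : ‖x‖ = 1) : x ∈ K := by
  obtain ⟨t, ht, y, hy, rfl⟩ := hx
  rw [norm_smul, mem_sphere_zero_iff_norm.mp (hK hy), mul_one, Real.norm_of_nonneg ht] at hx1
  rwa [hx1, one_smul]

lemma isClosed_coneOver {K : Set E} (hKc : IsCompact K) (hK : K ⊆ sphere 0 1) :
    IsClosed (coneOver K) := by
  refine isSeqClosed_iff_isClosed.mp fun u x hu hux => ?_
  choose t ht y hy hu_eq using hu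
  have ht_lim : Tendsto t atTop (𝓝 ‖x‖) := by
    refine hux.norm.congr fun k => ?_
    rw [hu_eq, norm_smul, mem_sphere_zero_iff_norm.mp (hK (hy k)), mul_one,
      Real.norm_of_nonneg (ht k)]
  obtain ⟨z, hz, φ, hφ, hyφ⟩ := hKc.tendsto_subseq hy
  refine ⟨‖x‖, norm_nonneg x, z, hz, tendsto_nhds_unique (hux.comp hφ.tendsto_atTop) ?_⟩
  simpa only [Function.comp_def, hu_eq] using (ht_lim.comp hφ.tendsto_atTop).smul hyφ

end Cone

section Inner

variable {E : Type*} [NormedAddCommGroup E] [InnerProductSpace ℝ E] [FiniteDimensional ℝ E]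

theorem exists_inner_eq_zero_iff_of_nonpos (F : Set E) :
    ∃ v : E, ∀ x, (∀ y ∈ F, ⟪x, y⟫ ≤ 0) →
      ⟪x, v⟫ ≤ 0 ∧ (⟪x, v⟫ = 0 ↔ ∀ y ∈ F, ⟪x, y⟫ = 0) := by
  obtain ⟨t, htF, -, hspan, -⟩ := Submodule.exists_finset_span_eq_linearIndepOn ℝ F
  refine ⟨∑ y ∈ t, y, fun x hx => ?_⟩
  have hxt : ∀ y ∈ t, ⟪x, y⟫ ≤ 0 := fun y hy => hx y (htF hy)
  rw [inner_sum, Finset.sum_eq_zero_iff_of_nonpos hxt]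
  refine ⟨Finset.sum_nonpos hxt, fun h y hy => ?_, fun h y hy => h y (htF hy)⟩
  have hspan_le : Submodule.span ℝ F ≤ (ℝ ∙ x)ᗮ := by
    rw [← hspan, Submodule.span_le]
    exact fun y hy => Submodule.mem_orthogonal_singleton_iff_inner_right.mpr (h y hy)
  exact Submodule.mem_orthogonal_singleton_iff_inner_right.mp
    (hspan_le (Submodule.subset_span hy))

end Inner

section Sphere

variable {d : ℕ}

lemma mem_uSphere_iff {x : Euc (d + 1)} : x ∈ uSphere d ↔ ‖x‖ = 1 :=
  mem_sphere_zero_iff_norm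

lemma nproj_mem_uSphere {x : Euc (d + 1)} (hx : x ≠ 0) : nproj x ∈ uSphere d := by
  rw [mem_uSphere_iff, nproj, norm_smul, norm_inv, norm_norm, inv_mul_cancel₀]
  exact norm_ne_zero_iff.mpr hx

lemma sphInt_subset (K : Set (Euc (d + 1))) : sphInt d K ⊆ K :=
  fun _ ⟨hy, _, _, hyU, hUK⟩ => hUK ⟨hyU, hy⟩

lemma add_mem_coneOver {K : Set (Euc (d + 1))} (hK : SphConvex d K) {p q : Euc (d + 1)}
    (hp : p ∈ coneOver K) (hq : q ∈ coneOver K) : p + q ∈ coneOver K := by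
  obtain ⟨a, ha, y, hy, rfl⟩ := hp
  obtain ⟨b, hb, z, hz, rfl⟩ := hq
  obtain ⟨c, -, hc⟩ := hK.2.1
  rcases (add_nonneg ha hb).eq_or_lt with hab | hab
  · obtain rfl : a = 0 := by linarith
    obtain rfl : b = 0 := by linarith
    exact ⟨0, le_rfl, y, hy, by simp⟩
  set s := b / (a + b)
  have hs : s ∈ Icc (0 : ℝ) 1 := ⟨by positivity, div_le_one_of_le₀ (by linarith) hab.le⟩
  set w := (1 - s) • y + s • z
  have hw : w ≠ 0 := by
    have hcw : 0 < ⟪c, w⟫ := by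
      simp only [w, inner_add_right, real_inner_smul_right]
      have hA := (hc hy).2
      have hB := (hc hz).2
      nlinarith [mul_pos hA hB, mul_nonneg (sub_nonneg.2 hs.2) (sq_nonneg ⟪c, y⟫),
        mul_nonneg hs.1 (sq_nonneg ⟪c, z⟫)]
    rintro h
    simp [h] at hcw
  have hw_eq : (a + b) • w = a • y + b • z := by
    simp only [w, s, smul_add, smul_smul]
    congr 2 <;> field_simp
    ring
  refine ⟨(a + b) * ‖w‖, by positivity, nproj w, hK.2.2 y hy z hz ⟨s, hs, rfl⟩, ?_⟩
  rw [mul_smul, norm_smul_nproj hw, hw_eq]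

theorem sphPolar_sphPolar {K : Set (Euc (d + 1))} (hKc : IsCompact K) (hKv : SphConvex d K)
    (hne : K.Nonempty) : sphPolar d (sphPolar d K) = K := by
  refine Subset.antisymm (fun z ⟨hz1, hz⟩ => ?_)
    fun y hy => ⟨hKv.1 hy, fun x hx => real_inner_comm x y ▸ hx.2 y hy⟩
  by_contra hzK
  let C : ProperCone ℝ (Euc (d + 1)) :=
    { carrier := coneOver K
      add_mem' := add_mem_coneOver hKv
      zero_mem' := by simpa using smul_mem_coneOver le_rfl (subset_coneOver K hne.some_mem)
      smul_mem' := fun c _ hx => smul_mem_coneOver c.2 hx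
      isClosed' := isClosed_coneOver hKc hKv.1 }
  obtain ⟨v, hvC, hzv⟩ := C.hyperplane_separation' (x₀ := z)
    fun h => hzK (mem_of_mem_coneOver hKv.1 h (mem_uSphere_iff.mp hz1))
  have hv0 : -v ≠ 0 := by
    rintro h
    simp [neg_eq_zero.mp h] at hzv
  have hpolar : nproj (-v) ∈ sphPolar d K := by
    refine ⟨nproj_mem_uSphere hv0, fun y hy => ?_⟩
    rw [real_inner_comm, inner_nproj_right, inner_neg_right]
    exact mul_nonpos_of_nonneg_of_nonpos (inv_nonneg.mpr (norm_nonneg _))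
      (neg_nonpos.mpr (hvC y (subset_coneOver K hy)))
  have hz_le := hz _ hpolar
  rw [inner_nproj_right, inner_neg_right] at hz_le
  have : 0 < ‖-v‖⁻¹ := inv_pos.mpr (norm_pos_iff.mpr hv0)
  nlinarith

theorem inner_lt_zero_of_mem_sphInt {K : Set (Euc (d + 1))} {x y : Euc (d + 1)}
    (hy : y ∈ sphInt d K) (hx : x ∈ sphPolar d K) : ⟪x, y⟫ < 0 := by
  obtain ⟨hy1, U, hU, hyU, hUK⟩ := hy
  have hy0 : y ≠ 0 := norm_ne_zero_iff.mp (by simp [mem_uSphere_iff.mp hy1])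
  have hlim : Tendsto (fun ε : ℝ => nproj (y + ε • x)) (𝓝[>] 0) (𝓝 y) := by
    have hcont : ContinuousAt (fun ε : ℝ => nproj (y + ε • x)) 0 :=
      (continuousAt_nproj hy0).comp_of_eq (by fun_prop) (by simp)
    simpa [nproj_eq_self (mem_uSphere_iff.mp hy1)] using hcont.tendsto.mono_left nhdsWithin_le_nhds
  obtain ⟨ε, hεU, hε⟩ := ((hlim.eventually (hU.mem_nhds hyU)).and self_mem_nhdsWithin).exists
  by_contra! hxy
  have hxyε : ⟪x, y + ε • x⟫ = ⟪x, y⟫ + ε := by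
    rw [inner_add_right, real_inner_smul_right, real_inner_self_eq_norm_sq,
      mem_uSphere_iff.mp hx.1]
    ring
  have hne : y + ε • x ≠ 0 := by
    rintro h
    rw [h, inner_zero_right] at hxyε
    linarith
  have hle := hx.2 _ (hUK ⟨hεU, nproj_mem_uSphere hne⟩)
  rw [inner_nproj_right, hxyε] at hle
  have : 0 < ‖y + ε • x‖⁻¹ := inv_pos.mpr (norm_pos_iff.mpr hne)
  nlinarith

end Sphere

section ConjugateFace

variable {d : ℕ} {L G : Set (Euc (d + 1))}

lemma IsSphExposedFace.subset (hG : IsSphExposedFace d L G) : G ⊆ L := by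
  obtain ⟨-, u, -, -, rfl⟩ := hG
  exact fun y hy => hy.1

theorem IsSphExposedFace.conjFace {c : Euc (d + 1)} (hc : ∀ y ∈ L, 0 < ⟪c, y⟫)
    (hG : IsSphExposedFace d L G) : IsSphExposedFace d (sphPolar d L) (conjFace d L G) := by
  obtain ⟨⟨y₁, hy₁⟩, u, hu, hu_supp, hG_eq⟩ := hG
  have hGL : G ⊆ L := hG_eq ▸ fun y hy => hy.1
  obtain ⟨v, hv⟩ := exists_inner_eq_zero_iff_of_nonpos G
  have hc_neg : ∀ y ∈ G, ⟪-c, y⟫ < 0 := fun y hy => by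
    rw [inner_neg_left]
    linarith [hc y (hGL hy)]
  have hv0 : v ≠ 0 := by
    rintro rfl
    exact (hc_neg y₁ hy₁).ne
      ((hv (-c) fun y hy => (hc_neg y hy).le).2.mp (inner_zero_right _) y₁ hy₁)
  have hpolar_nonpos : ∀ x ∈ sphPolar d L, ∀ y ∈ G, ⟪x, y⟫ ≤ 0 :=
    fun x hx y hy => hx.2 y (hGL hy)
  refine ⟨⟨u, ⟨hu, hu_supp⟩, fun y hy => (hG_eq ▸ hy).2⟩, nproj v, nproj_mem_uSphere hv0,
    fun x hx => ?_, ?_⟩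
  · rw [real_inner_comm, inner_nproj_right]
    exact mul_nonpos_of_nonneg_of_nonpos (inv_nonneg.mpr (norm_nonneg v))
      (hv x (hpolar_nonpos x hx)).1
  · ext x
    refine ⟨fun ⟨hx, hxG⟩ => ⟨hx, ?_⟩, fun ⟨hx, hxv⟩ => ⟨hx, ?_⟩⟩
    · rw [real_inner_comm, inner_nproj_right, (hv x (hpolar_nonpos x hx)).2.mpr hxG, mul_zero]
    · rw [real_inner_comm, inner_nproj_right] at hxv
      exact (hv x (hpolar_nonpos x hx)).2.mp
        ((mul_eq_zero.mp hxv).resolve_left (inv_ne_zero (norm_ne_zero_iff.mpr hv0)))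

theorem conjFace_conjFace (hL : sphPolar d (sphPolar d L) = L) (hG : IsSphExposedFace d L G) :
    conjFace d (sphPolar d L) (conjFace d L G) = G := by
  obtain ⟨-, u, hu, hu_supp, hG_eq⟩ := hG
  have hu_conj : u ∈ conjFace d L G := ⟨⟨hu, hu_supp⟩, fun y hy => (hG_eq ▸ hy).2⟩
  ext z
  refine ⟨fun ⟨hz, hz_orth⟩ => ?_, fun hz => ⟨?_, fun x hx => ?_⟩⟩
  · rw [hL] at hz
    rw [hG_eq]
    exact ⟨hz, real_inner_comm u z ▸ hz_orth u hu_conj⟩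
  · rw [hL]
    exact (hG_eq ▸ hz).1
  · rw [real_inner_comm]
    exact hx.2 z hz

theorem bijOn_conjFace (hL : sphPolar d (sphPolar d L) = L) {c c' : Euc (d + 1)}
    (hc : ∀ y ∈ L, 0 < ⟪c, y⟫) (hc' : ∀ x ∈ sphPolar d L, 0 < ⟪c', x⟫) :
    BijOn (conjFace d L) {G | IsSphExposedFace d L G}
      {H | IsSphExposedFace d (sphPolar d L) H} := by
  have hL' : sphPolar d (sphPolar d (sphPolar d L)) = sphPolar d L := congrArg (sphPolar d) hL
  refine InvOn.bijOn ⟨fun G hG => conjFace_conjFace hL hG, fun H hH => ?_⟩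
    (fun G hG => hG.conjFace hc)
    fun H hH => by simpa only [mem_ofPred_eq, hL] using hH.conjFace hc'
  have := conjFace_conjFace hL' hH
  rwa [hL] at this

lemma conjFace_eq_iInter (hG : G.Nonempty) :
    conjFace d L G = ⋂ y ∈ G, ({x ∈ uSphere d | ⟪x, y⟫ = 0} ∩ sphPolar d L) := by
  ext x
  simp only [mem_iInter, mem_inter_iff, mem_ofPred_eq]
  refine ⟨fun ⟨hx, hxG⟩ y hy => ⟨⟨hx.1, hxG y hy⟩, hx⟩, fun h => ?_⟩
  obtain ⟨y₁, hy₁⟩ := hG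
  exact ⟨(h y₁ hy₁).2, fun y hy => (h y hy).1.2⟩

lemma conjFace_ne_sphPolar {c : Euc (d + 1)} (hc : c ∈ uSphere d) (hcL : ∀ y ∈ L, 0 < ⟪c, y⟫)
    (hG : G.Nonempty) (hGL : G ⊆ L) : conjFace d L G ≠ sphPolar d L := by
  obtain ⟨y, hy⟩ := hG
  have hneg : -c ∈ sphPolar d L :=
    ⟨by simpa [mem_uSphere_iff] using hc, fun y hy => by simpa using (hcL y hy).le⟩
  intro h
  have := (h ▸ hneg).2 y hy
  rw [inner_neg_left] at this
  linarith [hcL y (hGL hy)]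

end ConjugateFace

theorem stmt15_general (d : ℕ) (K : Set (Euc (d + 1))) (hK : IsSphBody d K)
    (F : Set (Euc (d + 1))) (hF : IsSphExposedFace d K F) :
    IsSphExposedFace d (sphPolar d K) (conjFace d K F) ∧
    conjFace d K F ≠ sphPolar d K ∧
    conjFace d K F = ⋂ y ∈ F, ({x ∈ uSphere d | ⟪x, y⟫ = 0} ∩ sphPolar d K) ∧
    (∀ y ∈ F, ∀ x ∈ sphPolar d K, ⟪x, y⟫ ≤ 0) ∧
    conjFace d (sphPolar d K) (conjFace d K F) = F ∧
    Set.BijOn (conjFace d K) {G | IsSphExposedFace d K G}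
      {G | IsSphExposedFace d (sphPolar d K) G} := by
  obtain ⟨hKc, hKv, y₀, hy₀⟩ := hK
  obtain ⟨c, hc, hcK⟩ := hKv.2.1
  have hcK' : ∀ y ∈ K, 0 < ⟪c, y⟫ := fun y hy => (hcK hy).2
  have hy₀K' : ∀ x ∈ sphPolar d K, 0 < ⟪-y₀, x⟫ := fun x hx => by
    simpa [real_inner_comm] using inner_lt_zero_of_mem_sphInt hy₀ hx
  have hbip : sphPolar d (sphPolar d K) = K :=
    sphPolar_sphPolar hKc hKv ⟨y₀, sphInt_subset K hy₀⟩
  exact ⟨hF.conjFace hcK', conjFace_ne_sphPolar hc hcK' hF.1 hF.subset,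
    conjFace_eq_iInter hF.1, fun y hy x hx => hx.2 y (hF.subset hy),
    conjFace_conjFace hbip hF, bijOn_conjFace hbip hcK' hy₀K'⟩

/-- The conjugate face `F̂` of a proper exposed face `F` of a convex body `K ⊆ S^d` is a
proper exposed face of `K*`; moreover `F̂ = ⋂_{y ∈ F} ({x : ⟪x, y⟫ = 0} ∩ K*)`, where for
every `y ∈ F` the closed hemisphere `{x : ⟪x, y⟫ ≤ 0}` contains `K*`; the conjugate of
`F̂` with respect to `K*` equals `F`, and `F ↦ F̂` is a bijection between the exposed faces
of `K` and those of `K*`. -/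
theorem stmt15 (d : ℕ) (K : Set (Euc (d + 1))) (hK : IsSphBody d K)
    (F : Set (Euc (d + 1))) (hF : IsSphExposedFace d K F) (hFp : F ≠ K) :
    IsSphExposedFace d (sphPolar d K) (conjFace d K F) ∧
    conjFace d K F ≠ sphPolar d K ∧
    conjFace d K F = ⋂ y ∈ F, ({x ∈ uSphere d | ⟪x, y⟫ = 0} ∩ sphPolar d K) ∧
    (∀ y ∈ F, ∀ x ∈ sphPolar d K, ⟪x, y⟫ ≤ 0) ∧
    conjFace d (sphPolar d K) (conjFace d K F) = F ∧
    Set.BijOn (conjFace d K) {G | IsSphExposedFace d K G}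
      {G | IsSphExposedFace d (sphPolar d K) G} :=
  stmt15_general d K hK F hF
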